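/- arXiv:1807.08292 — 2 statements merged into one kernel-verified Lean document; each statement's English description precedes it below -/
import Mathlib

section
/- For every partition λ and positive integer k, there is a bijection between BSSYT(λ,k) and the set of triples (P, i, C) where P ∈ RPP(λ,k), 1 ≤ i ≤ k, and C is a corner of the induced subshape α(P,i). In particular, |BSSYT(λ,k)| = Σ_{P ∈ RPP(λ,k)} Σ_{i=1}^{k} (number of corners of α(P,i)). -/
open Polynomial

/-- The set of cells of the Young diagram of the partition with parts
`lam 1 ≥ lam 2 ≥ … ≥ lam r`, i.e. pairs `(i,j)` with `1 ≤ i ≤ r` and `1 ≤ j ≤ lam i`. -/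
def cells (lam : ℕ → ℕ) (r : ℕ) : Set (ℕ × ℕ) :=
  {p | 1 ≤ p.1 ∧ p.1 ≤ r ∧ 1 ≤ p.2 ∧ p.2 ≤ lam p.1}

/-- `lam` restricted to indices `1,…,r` is a partition with `r` (positive) parts. -/
def IsPartition (lam : ℕ → ℕ) (r : ℕ) : Prop :=
  (∀ i, 1 ≤ i → i + 1 ≤ r → lam (i + 1) ≤ lam i) ∧ (∀ i, 1 ≤ i → i ≤ r → 1 ≤ lam i)

/-- A partition with `r` rows and `c = lam 1` columns is balanced if every outward corner
of its southeast boundary lies on the main anti-diagonal: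
whenever `1 ≤ i < r` and `lam (i+1) < lam i`, one has `lam 1 * (r - i) = r * lam (i+1)`. -/
def IsBalanced (lam : ℕ → ℕ) (r : ℕ) : Prop :=
  ∀ i, 1 ≤ i → i < r → lam (i + 1) < lam i → lam 1 * (r - i) = r * lam (i + 1)

/-- Flagged semistandard Young tableaux of shape `lam` (with `r` rows):
positive entries, weakly increasing along rows, strictly increasing down columns,
entries in row `i` at most `k + i`; entries outside the diagram are normalized to `0`. -/
def SYT (lam : ℕ → ℕ) (r k : ℕ) : Set ((ℕ × ℕ) → ℕ) :=
  {T | (∀ p, p ∉ cells lam r → T p = 0) ∧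
       (∀ p ∈ cells lam r, 1 ≤ T p ∧ T p ≤ k + p.1) ∧
       (∀ i j, (i, j) ∈ cells lam r → (i, j + 1) ∈ cells lam r → T (i, j) ≤ T (i, j + 1)) ∧
       (∀ i j, (i, j) ∈ cells lam r → (i + 1, j) ∈ cells lam r → T (i, j) < T (i + 1, j))}

/-- Flagged barely set-valued semistandard Young tableaux of shape `lam` (with `r` rows):
finite nonempty sets of positive integers in each cell, exactly one cell receiving a
two-element set and all other cells singletons, weakly increasing along rows
(`A ≤ B` iff every element of `A` is at most every element of `B`) and strictly
increasing down columns, every entry in row `i` at most `k + i`;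
cells outside the diagram are normalized to `∅`. -/
def BSSYT (lam : ℕ → ℕ) (r k : ℕ) : Set ((ℕ × ℕ) → Finset ℕ) :=
  {T | (∀ p, p ∉ cells lam r → T p = ∅) ∧
       (∃ B ∈ cells lam r, (T B).card = 2 ∧ ∀ p ∈ cells lam r, p ≠ B → (T p).card = 1) ∧
       (∀ p ∈ cells lam r, ∀ x ∈ T p, 1 ≤ x ∧ x ≤ k + p.1) ∧
       (∀ i j, (i, j) ∈ cells lam r → (i, j + 1) ∈ cells lam r →
          ∀ x ∈ T (i, j), ∀ y ∈ T (i, j + 1), x ≤ y) ∧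
       (∀ i j, (i, j) ∈ cells lam r → (i + 1, j) ∈ cells lam r →
          ∀ x ∈ T (i, j), ∀ y ∈ T (i + 1, j), x < y)}

/-- Reverse plane partitions of shape `lam` (with `r` rows) with entries in `{0,…,k}`:
weakly increasing along rows and down columns; entries outside the diagram normalized to `0`. -/
def RPP (lam : ℕ → ℕ) (r k : ℕ) : Set ((ℕ × ℕ) → ℕ) :=
  {P | (∀ p, p ∉ cells lam r → P p = 0) ∧
       (∀ p ∈ cells lam r, P p ≤ k) ∧
       (∀ i j, (i, j) ∈ cells lam r → (i, j + 1) ∈ cells lam r → P (i, j) ≤ P (i, j + 1)) ∧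
       (∀ i j, (i, j) ∈ cells lam r → (i + 1, j) ∈ cells lam r → P (i, j) ≤ P (i + 1, j))}

/-- A subshape of `lam`: a down-closed subset of the cells of `lam`
(i.e. a Young diagram contained in `lam`). -/
def IsSubshape (lam : ℕ → ℕ) (r : ℕ) (μ : Set (ℕ × ℕ)) : Prop :=
  μ ⊆ cells lam r ∧
  ∀ p ∈ μ, ∀ q : ℕ × ℕ, 1 ≤ q.1 → q.1 ≤ p.1 → 1 ≤ q.2 → q.2 ≤ p.2 → q ∈ μ

/-- The induced subshape `α(P,i)`: cells of `lam` whose entry in `P` is strictly less than `i`. -/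
def alphaShape (lam : ℕ → ℕ) (r : ℕ) (P : (ℕ × ℕ) → ℕ) (i : ℕ) : Set (ℕ × ℕ) :=
  {p | p ∈ cells lam r ∧ P p < i}

/-- A corner of a subshape `μ`: a cell of `μ` such that the cells immediately below
and to the right are not in `μ`. -/
def IsShapeCorner (μ : Set (ℕ × ℕ)) (p : ℕ × ℕ) : Prop :=
  p ∈ μ ∧ (p.1 + 1, p.2) ∉ μ ∧ (p.1, p.2 + 1) ∉ μ

/-- A proper outside corner of a subshape `μ` of `lam`: a cell of `lam` not in `μ` whose
upper neighbour is in `μ` (or which lies in the first row) and whose left neighbour is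
in `μ` (or which lies in the first column). -/
def IsProperOutsideCorner (lam : ℕ → ℕ) (r : ℕ) (μ : Set (ℕ × ℕ)) (p : ℕ × ℕ) : Prop :=
  p ∈ cells lam r ∧ p ∉ μ ∧
  ((p.1 - 1, p.2) ∈ μ ∨ p.1 = 1) ∧ ((p.1, p.2 - 1) ∈ μ ∨ p.2 = 1)

/-- The jaggedness of a subshape `μ` of `lam`: the number of corners of `μ` plus the
number of proper outside corners of `μ`. -/
noncomputable def jag (lam : ℕ → ℕ) (r : ℕ) (μ : Set (ℕ × ℕ)) : ℕ :=
  {p | IsShapeCorner μ p}.ncard + {p | IsProperOutsideCorner lam r μ p}.ncard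

/-- `p` can be toggled into the subshape `μ`. -/
def ToggleIn (lam : ℕ → ℕ) (r : ℕ) (μ : Set (ℕ × ℕ)) (p : ℕ × ℕ) : Prop :=
  p ∉ μ ∧ IsSubshape lam r (insert p μ)

/-- `p` can be toggled out of the subshape `μ`. -/
def ToggleOut (lam : ℕ → ℕ) (r : ℕ) (μ : Set (ℕ × ℕ)) (p : ℕ × ℕ) : Prop :=
  p ∈ μ ∧ IsSubshape lam r (μ \ {p})

/-- The `j`-th part of the rectangular staircase partition `δ_d(b^a)`,
namely `b * (d - ⌈j/a⌉)`. -/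
def deltaSC (a b d : ℕ) : ℕ → ℕ := fun j => b * (d - (j + a - 1) / a)

/-!
Entries of row `n` of a column-strict tableau are at least `n`, so subtracting the row index
from every entry turns column-strictness into weak increase and the flag `k + n` into the
bound `k`: the smaller entries of a barely set-valued tableau `T` form a reverse plane
partition `P`, and the larger entry `i + C.1` of the doubled cell `C` records a level `i`.
Row- and column-compatibility of that extra entry say exactly that `P C < i` while the cells
right of and below `C` have `P`-value at least `i`, i.e. that `C` is a corner of `α(P,i)`.
Counting the triples `(P, i, C)` fibre by fibre gives the sum.
-/

namespace Set

variable {α β : Type*} {A : Set α} {F : α → Set β}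

lemma setOf_mem_fibers_eq_biUnion :
    {t : α × β | t.1 ∈ A ∧ t.2 ∈ F t.1} = ⋃ a ∈ A, Prod.mk a '' F a := by
  ext ⟨a, b⟩
  simp [and_comm]

lemma Finite.setOf_mem_fibers (hA : A.Finite) (hF : ∀ a ∈ A, (F a).Finite) :
    {t : α × β | t.1 ∈ A ∧ t.2 ∈ F t.1}.Finite := by
  rw [setOf_mem_fibers_eq_biUnion]
  exact hA.biUnion fun a ha => (hF a ha).image _

lemma ncard_setOf_mem_fibers (hA : A.Finite) (hF : ∀ a ∈ A, (F a).Finite) :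
    {t : α × β | t.1 ∈ A ∧ t.2 ∈ F t.1}.ncard = ∑ᶠ a ∈ A, (F a).ncard := by
  have hdisj : A.PairwiseDisjoint fun a => Prod.mk a '' F a := by
    intro a _ b _ hab
    simp only [Function.onFun, disjoint_left, mem_image]
    rintro _ ⟨_, _, rfl⟩ ⟨_, _, h⟩
    exact hab (congrArg Prod.fst h).symm
  rw [setOf_mem_fibers_eq_biUnion, hA.ncard_biUnion (fun a ha => (hF a ha).image _) hdisj]
  exact finsum_mem_congr rfl fun a _ => ncard_image_of_injective _ (Prod.mk_right_injective a)

end Set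

lemma cells_finite (lam : ℕ → ℕ) (r : ℕ) : (cells lam r).Finite := by
  refine (Set.finite_Icc ((1 : ℕ), (1 : ℕ)) (r, (Finset.Icc 1 r).sup lam)).subset ?_
  rintro ⟨a, b⟩ ⟨h1, h2, h3, h4⟩
  exact ⟨⟨h1, h3⟩, h2, h4.trans (Finset.le_sup (Finset.mem_Icc.2 ⟨h1, h2⟩))⟩

lemma rpp_finite (lam : ℕ → ℕ) (r k : ℕ) : (RPP lam r k).Finite := by
  have := (cells_finite lam r).to_subtype
  refine Set.Finite.of_injOn (f := fun P (c : cells lam r) => P c)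
    (t := Set.univ.pi fun _ : cells lam r => Set.Iic k) (fun P hP c _ => hP.2.1 c c.2) ?_
    (Set.Finite.pi fun _ => Set.finite_Iic k)
  intro P hP Q hQ h
  funext p
  by_cases hp : p ∈ cells lam r
  · exact congrFun h ⟨p, hp⟩
  · rw [hP.1 p hp, hQ.1 p hp]

lemma IsPartition.mem_cells_of_succ {lam : ℕ → ℕ} {r n j : ℕ} (hpart : IsPartition lam r)
    (hn : 1 ≤ n) (h : (n + 1, j) ∈ cells lam r) : (n, j) ∈ cells lam r :=
  ⟨hn, by have := h.2.1; omega, h.2.2.1, h.2.2.2.trans (hpart.1 n hn h.2.1)⟩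

lemma sInf_lt_sSup_of_card_eq_two {s : Finset ℕ} (h : s.card = 2) :
    sInf (s : Set ℕ) < sSup (s : Set ℕ) := by
  obtain ⟨x, y, hxy, rfl⟩ := Finset.card_eq_two.1 h
  rw [Finset.coe_pair, csInf_pair, csSup_pair]
  exact min_lt_max.2 hxy

section CornerTableau

variable {lam : ℕ → ℕ} {r k : ℕ} {P : (ℕ × ℕ) → ℕ} {i : ℕ} {C p : ℕ × ℕ}

open Classical in
noncomputable def cornerTableau (lam : ℕ → ℕ) (r : ℕ) (P : (ℕ × ℕ) → ℕ) (i : ℕ)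
    (C : ℕ × ℕ) : (ℕ × ℕ) → Finset ℕ :=
  fun p => if p ∈ cells lam r then
    (if p = C then {P p + p.1, i + p.1} else {P p + p.1}) else ∅

lemma cornerTableau_of_notMem (hp : p ∉ cells lam r) : cornerTableau lam r P i C p = ∅ := by
  simp [cornerTableau, hp]

lemma cornerTableau_of_ne (hp : p ∈ cells lam r) (hpC : p ≠ C) :
    cornerTableau lam r P i C p = {P p + p.1} := by
  simp [cornerTableau, hp, hpC]

lemma cornerTableau_self (hC : C ∈ cells lam r) :
    cornerTableau lam r P i C C = {P C + C.1, i + C.1} := by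
  simp [cornerTableau, hC]

lemma mem_cornerTableau {x : ℕ} :
    x ∈ cornerTableau lam r P i C p ↔ p ∈ cells lam r ∧ (x = P p + p.1 ∨ p = C ∧ x = i + p.1) := by
  by_cases hp : p ∈ cells lam r
  · by_cases hpC : p = C
    · subst hpC
      simp [cornerTableau_self hp, hp]
    · simp [cornerTableau_of_ne hp hpC, hp, hpC]
  · simp [cornerTableau_of_notMem hp, hp]

lemma card_cornerTableau (hp : p ∈ cells lam r) (hi : P C < i) :
    (cornerTableau lam r P i C p).card = if p = C then 2 else 1 := by
  split_ifs with hpC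
  · subst hpC
    rw [cornerTableau_self hp, Finset.card_pair (by omega)]
  · rw [cornerTableau_of_ne hp hpC, Finset.card_singleton]

lemma sInf_cornerTableau (hp : p ∈ cells lam r) (hi : P C < i) :
    sInf (cornerTableau lam r P i C p : Set ℕ) = P p + p.1 := by
  by_cases hpC : p = C
  · subst hpC
    rw [cornerTableau_self hp, Finset.coe_pair, csInf_pair]
    omega
  · rw [cornerTableau_of_ne hp hpC, Finset.coe_singleton, csInf_singleton]

lemma sSup_cornerTableau_self (hC : C ∈ cells lam r) (hi : P C < i) :
    sSup (cornerTableau lam r P i C C : Set ℕ) = i + C.1 := by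
  rw [cornerTableau_self hC, Finset.coe_pair, csSup_pair]
  omega

lemma le_of_mem_cornerTableau (hi : P C ≤ i) {y : ℕ} (hy : y ∈ cornerTableau lam r P i C p) :
    P p + p.1 ≤ y := by
  obtain ⟨-, rfl | ⟨rfl, rfl⟩⟩ := mem_cornerTableau.1 hy <;> omega

lemma le_of_mem_cornerTableau_of_adj (hC : IsShapeCorner (alphaShape lam r P i) C)
    {q : ℕ × ℕ} (hq : q ∈ cells lam r) (hadj : q = (p.1 + 1, p.2) ∨ q = (p.1, p.2 + 1))
    (hpq : P p ≤ P q) {x : ℕ} (hx : x ∈ cornerTableau lam r P i C p) : x ≤ P q + p.1 := by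
  obtain ⟨-, rfl | ⟨rfl, rfl⟩⟩ := mem_cornerTableau.1 hx
  · omega
  · have : ¬ P q < i := fun hlt => by
      rcases hadj with rfl | rfl
      exacts [hC.2.1 ⟨hq, hlt⟩, hC.2.2 ⟨hq, hlt⟩]
    omega

lemma cornerTableau_mem_BSSYT (hP : P ∈ RPP lam r k) (hik : i ≤ k)
    (hC : IsShapeCorner (alphaShape lam r P i) C) : cornerTableau lam r P i C ∈ BSSYT lam r k := by
  obtain ⟨hCc, hPC⟩ := hC.1
  refine ⟨fun p hp => cornerTableau_of_notMem hp, ⟨C, hCc, ?_, fun p hp hpC => ?_⟩, ?_, ?_, ?_⟩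
  · simpa using card_cornerTableau (P := P) hCc hPC
  · simpa [hpC] using card_cornerTableau (P := P) hp hPC
  · intro p hp x hx
    have := hP.2.1 p hp
    have := hp.1
    obtain ⟨-, rfl | ⟨-, rfl⟩⟩ := mem_cornerTableau.1 hx <;> omega
  · intro a b h1 h2 x hx y hy
    have := le_of_mem_cornerTableau_of_adj hC h2 (Or.inr rfl) (hP.2.2.1 a b h1 h2) hx
    have := le_of_mem_cornerTableau hPC.le hy
    dsimp only at *
    omega
  · intro a b h1 h2 x hx y hy
    have := le_of_mem_cornerTableau_of_adj hC h2 (Or.inl rfl) (hP.2.2.2 a b h1 h2) hx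
    have := le_of_mem_cornerTableau hPC.le hy
    dsimp only at *
    omega

end CornerTableau

-- Outside the diagram `T p = ∅` and `sInf ∅ = 0`, so the value there is `0`.
noncomputable def rppOfTableau (T : (ℕ × ℕ) → Finset ℕ) : (ℕ × ℕ) → ℕ :=
  fun p => sInf (T p : Set ℕ) - p.1

lemma rppOfTableau_cornerTableau {lam : ℕ → ℕ} {r k : ℕ} {P : (ℕ × ℕ) → ℕ} {i : ℕ}
    {C : ℕ × ℕ} (hP : P ∈ RPP lam r k) (hi : P C < i) :
    rppOfTableau (cornerTableau lam r P i C) = P := by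
  funext p
  by_cases hp : p ∈ cells lam r
  · rw [rppOfTableau, sInf_cornerTableau hp hi, Nat.add_sub_cancel]
  · simp [rppOfTableau, cornerTableau_of_notMem hp, hP.1 p hp]

lemma cornerTableau_inj {lam : ℕ → ℕ} {r k : ℕ} {P P' : (ℕ × ℕ) → ℕ} {i i' : ℕ}
    {C C' : ℕ × ℕ} (hP : P ∈ RPP lam r k) (hC : IsShapeCorner (alphaShape lam r P i) C)
    (hP' : P' ∈ RPP lam r k) (hC' : IsShapeCorner (alphaShape lam r P' i') C')
    (h : cornerTableau lam r P i C = cornerTableau lam r P' i' C') :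
    P = P' ∧ i = i' ∧ C = C' := by
  obtain ⟨hCc, hPC⟩ := hC.1
  obtain ⟨-, hPC'⟩ := hC'.1
  have hCC : C = C' := by
    have h2 := card_cornerTableau (P := P) (i := i) hCc hPC
    rw [h, card_cornerTableau hCc hPC'] at h2
    by_contra hne
    simp [hne] at h2
  subst hCC
  refine ⟨?_, ?_, rfl⟩
  · rw [← rppOfTableau_cornerTableau hP hPC, h, rppOfTableau_cornerTableau hP' hPC']
  · have h2 := sSup_cornerTableau_self (P := P) hCc hPC
    rw [h, sSup_cornerTableau_self hCc hPC'] at h2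
    omega

section OfBSSYT

variable {lam : ℕ → ℕ} {r k : ℕ} {T : (ℕ × ℕ) → Finset ℕ} {p B : ℕ × ℕ}

lemma nonempty_of_mem_BSSYT (hT : T ∈ BSSYT lam r k) (hp : p ∈ cells lam r) :
    (T p).Nonempty := by
  obtain ⟨-, ⟨B, -, hB2, hB1⟩, -⟩ := hT
  rw [← Finset.card_pos]
  by_cases hpB : p = B
  · subst hpB; omega
  · rw [hB1 p hp hpB]; omega

lemma sInf_mem_of_mem_BSSYT (hT : T ∈ BSSYT lam r k) (hp : p ∈ cells lam r) :
    sInf (T p : Set ℕ) ∈ T p :=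
  Nat.sInf_mem (Finset.coe_nonempty.2 (nonempty_of_mem_BSSYT hT hp))

lemma sSup_mem_of_mem_BSSYT (hT : T ∈ BSSYT lam r k) (hp : p ∈ cells lam r) :
    sSup (T p : Set ℕ) ∈ T p :=
  Nat.sSup_mem (Finset.coe_nonempty.2 (nonempty_of_mem_BSSYT hT hp)) (T p).bddAbove

lemma row_le_of_mem_BSSYT (hpart : IsPartition lam r) (hT : T ∈ BSSYT lam r k) :
    ∀ n j, (n, j) ∈ cells lam r → ∀ x ∈ T (n, j), n ≤ x := by
  intro n
  induction n with
  | zero => intro _ _ x _; exact x.zero_le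
  | succ m ih =>
    intro j hp x hx
    have h1x := (hT.2.2.1 _ hp x hx).1
    rcases Nat.eq_zero_or_pos m with rfl | hm
    · exact h1x
    · have hup := hpart.mem_cells_of_succ hm hp
      have hy := sInf_mem_of_mem_BSSYT hT hup
      have := hT.2.2.2.2 m j hup hp _ hy x hx
      have := ih j hup _ hy
      omega

lemma rppOfTableau_add_row (hpart : IsPartition lam r) (hT : T ∈ BSSYT lam r k)
    (hp : p ∈ cells lam r) : rppOfTableau T p + p.1 = sInf (T p : Set ℕ) :=
  Nat.sub_add_cancel (row_le_of_mem_BSSYT hpart hT p.1 p.2 hp _ (sInf_mem_of_mem_BSSYT hT hp))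

lemma rppOfTableau_mem_RPP (hT : T ∈ BSSYT lam r k) : rppOfTableau T ∈ RPP lam r k := by
  obtain ⟨hoff, -, hbnd, hrow, hcol⟩ := id hT
  refine ⟨fun p hp => by simp [rppOfTableau, hoff p hp], fun p hp => ?_, fun a b h1 h2 => ?_,
    fun a b h1 h2 => ?_⟩
  · have := (hbnd p hp _ (sInf_mem_of_mem_BSSYT hT hp)).2
    simp only [rppOfTableau]
    omega
  · have := hrow a b h1 h2 _ (sInf_mem_of_mem_BSSYT hT h1) _ (sInf_mem_of_mem_BSSYT hT h2)
    simp only [rppOfTableau]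
    omega
  · have := hcol a b h1 h2 _ (sInf_mem_of_mem_BSSYT hT h1) _ (sInf_mem_of_mem_BSSYT hT h2)
    simp only [rppOfTableau]
    omega


lemma isShapeCorner_of_mem_BSSYT (hpart : IsPartition lam r) (hT : T ∈ BSSYT lam r k)
    (hB : B ∈ cells lam r) (hB2 : (T B).card = 2) :
    IsShapeCorner (alphaShape lam r (rppOfTableau T) (sSup (T B : Set ℕ) - B.1)) B := by
  have hlt := sInf_lt_sSup_of_card_eq_two hB2
  have hmax := sSup_mem_of_mem_BSSYT hT hB
  have hrow := rppOfTableau_add_row hpart hT hB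
  refine ⟨⟨hB, by omega⟩, fun ⟨hq, hqlt⟩ => ?_, fun ⟨hq, hqlt⟩ => ?_⟩
  · have := hT.2.2.2.2 B.1 B.2 hB hq _ hmax _ (sInf_mem_of_mem_BSSYT hT hq)
    simp only [rppOfTableau] at hqlt
    omega
  · have := hT.2.2.2.1 B.1 B.2 hB hq _ hmax _ (sInf_mem_of_mem_BSSYT hT hq)
    simp only [rppOfTableau] at hqlt
    omega

lemma eq_cornerTableau_of_mem_BSSYT (hpart : IsPartition lam r) (hT : T ∈ BSSYT lam r k)
    (hB : B ∈ cells lam r) (hB2 : (T B).card = 2)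
    (hB1 : ∀ p ∈ cells lam r, p ≠ B → (T p).card = 1) :
    cornerTableau lam r (rppOfTableau T) (sSup (T B : Set ℕ) - B.1) B = T := by
  funext p
  by_cases hp : p ∈ cells lam r
  · by_cases hpB : p = B
    · subst hpB
      have hmax := row_le_of_mem_BSSYT hpart hT p.1 p.2 hp _ (sSup_mem_of_mem_BSSYT hT hp)
      obtain ⟨x, y, -, hxy⟩ := Finset.card_eq_two.1 hB2
      rw [cornerTableau_self hp, rppOfTableau_add_row hpart hT hp, Nat.sub_add_cancel hmax, hxy,
        Finset.coe_pair, csInf_pair, csSup_pair]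
      rcases le_total x y with h | h
      · simp [h]
      · simp [h, Finset.pair_comm]
    · obtain ⟨x, hx⟩ := Finset.card_eq_one.1 (hB1 p hp hpB)
      rw [cornerTableau_of_ne hp hpB, rppOfTableau_add_row hpart hT hp, hx, Finset.coe_singleton,
        csInf_singleton]
  · rw [cornerTableau_of_notMem hp, hT.1 p hp]

end OfBSSYT

def cornerTriples (lam : ℕ → ℕ) (r k : ℕ) : Set (((ℕ × ℕ) → ℕ) × ℕ × (ℕ × ℕ)) :=
  {t | t.1 ∈ RPP lam r k ∧ 1 ≤ t.2.1 ∧ t.2.1 ≤ k ∧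
    IsShapeCorner (alphaShape lam r t.1 t.2.1) t.2.2}

lemma cornerTableau_bijective {lam : ℕ → ℕ} {r k : ℕ} (hpart : IsPartition lam r) :
    Function.Bijective fun t : cornerTriples lam r k =>
      (⟨cornerTableau lam r t.1.1 t.1.2.1 t.1.2.2,
        cornerTableau_mem_BSSYT t.2.1 t.2.2.2.1 t.2.2.2.2⟩ : BSSYT lam r k) := by
  constructor
  · intro ⟨⟨P, i, C⟩, hP, _, _, hC⟩ ⟨⟨P', i', C'⟩, hP', _, _, hC'⟩ h
    obtain ⟨rfl, rfl, rfl⟩ := cornerTableau_inj hP hC hP' hC' (congrArg Subtype.val h)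
    rfl
  · rintro ⟨T, hT⟩
    obtain ⟨B, hB, hB2, hB1⟩ := hT.2.1
    have hC := isShapeCorner_of_mem_BSSYT hpart hT hB hB2
    have hk := (hT.2.2.1 B hB _ (sSup_mem_of_mem_BSSYT hT hB)).2
    exact ⟨⟨(rppOfTableau T, sSup (T B : Set ℕ) - B.1, B), rppOfTableau_mem_RPP hT,
      Nat.one_le_of_lt hC.1.2, Nat.sub_le_iff_le_add.2 hk, hC⟩,
      Subtype.ext (eq_cornerTableau_of_mem_BSSYT hpart hT hB hB2 hB1)⟩

lemma ncard_cornerTriples (lam : ℕ → ℕ) (r k : ℕ) :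
    (cornerTriples lam r k).ncard = ∑ᶠ P ∈ RPP lam r k, ∑ i ∈ Finset.Icc 1 k,
      {p | IsShapeCorner (alphaShape lam r P i) p}.ncard := by
  have hcorners (P : (ℕ × ℕ) → ℕ) (i : ℕ) : {p | IsShapeCorner (alphaShape lam r P i) p}.Finite :=
    (cells_finite lam r).subset fun _ hp => hp.1.1
  have hfibers : cornerTriples lam r k = {t | t.1 ∈ RPP lam r k ∧
      t.2 ∈ {u : ℕ × (ℕ × ℕ) | u.1 ∈ Set.Icc 1 k ∧
        u.2 ∈ {p | IsShapeCorner (alphaShape lam r t.1 u.1) p}}} := by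
    simp only [cornerTriples, Set.mem_ofPred_eq, Set.mem_Icc, and_assoc]
  rw [hfibers, Set.ncard_setOf_mem_fibers (rpp_finite lam r k)
    fun P _ => (Set.finite_Icc 1 k).setOf_mem_fibers fun i _ => hcorners P i]
  refine finsum_mem_congr rfl fun P _ => ?_
  rw [Set.ncard_setOf_mem_fibers (Set.finite_Icc 1 k) fun i _ => hcorners P i, ← Finset.coe_Icc,
    finsum_mem_coe_finset]

theorem bssyt_corner_representation_general (lam : ℕ → ℕ) (r k : ℕ)
    (hpart : IsPartition lam r) :
    Nonempty ((BSSYT lam r k) ≃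
      {t : ((ℕ × ℕ) → ℕ) × ℕ × (ℕ × ℕ) //
        t.1 ∈ RPP lam r k ∧ 1 ≤ t.2.1 ∧ t.2.1 ≤ k ∧
        IsShapeCorner (alphaShape lam r t.1 t.2.1) t.2.2}) ∧
    (BSSYT lam r k).ncard =
      ∑ᶠ P ∈ RPP lam r k, ∑ i ∈ Finset.Icc 1 k,
        {p | IsShapeCorner (alphaShape lam r P i) p}.ncard := by
  let e : cornerTriples lam r k ≃ BSSYT lam r k := .ofBijective _ (cornerTableau_bijective hpart)
  refine ⟨⟨e.symm⟩, ?_⟩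
  rw [← ncard_cornerTriples, ← Nat.card_coe_set_eq, ← Nat.card_coe_set_eq, Nat.card_congr e]

/-- Theorem 3.2: `BSSYT(λ,k)` is in bijection with triples `(P, i, C)`
where `P ∈ RPP(λ,k)`, `1 ≤ i ≤ k`, and `C` is a corner of `α(P,i)`; in particular
`|BSSYT(λ,k)| = Σ_{P ∈ RPP(λ,k)} Σ_{i=1}^k #{corners of α(P,i)}`. -/
theorem bssyt_corner_representation (lam : ℕ → ℕ) (r k : ℕ)
    (hpart : IsPartition lam r) (hk : 1 ≤ k) :
    Nonempty ((BSSYT lam r k) ≃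
      {t : ((ℕ × ℕ) → ℕ) × ℕ × (ℕ × ℕ) //
        t.1 ∈ RPP lam r k ∧ 1 ≤ t.2.1 ∧ t.2.1 ≤ k ∧
        IsShapeCorner (alphaShape lam r t.1 t.2.1) t.2.2}) ∧
    (BSSYT lam r k).ncard =
      ∑ᶠ P ∈ RPP lam r k, ∑ i ∈ Finset.Icc 1 k,
        {p | IsShapeCorner (alphaShape lam r P i) p}.ncard :=
  bssyt_corner_representation_general lam r k hpart
end

section
/- For every partition λ, positive integer k, and cell p of λ, the number of pairs (P,i) with P ∈ RPP(λ,k) and 1 ≤ i ≤ k such that p can be toggled into α(P,i) equals the number of such pairs for which p can be toggled out of α(P,i). In other words, the weak distribution on subshapes of λ is toggle-symmetric at every cell. -/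
open Polynomial

open scoped Classical

section ToggleAux

variable {lam : ℕ → ℕ} {r k : ℕ}

lemma mem_cells_iff {c d : ℕ} :
    (c, d) ∈ cells lam r ↔ 1 ≤ c ∧ c ≤ r ∧ 1 ≤ d ∧ d ≤ lam c := Iff.rfl

lemma lam_anti (hpart : IsPartition lam r) {i j : ℕ} (h1 : 1 ≤ i) (hij : i ≤ j)
    (hjr : j ≤ r) : lam j ≤ lam i := by
  obtain ⟨h, -⟩ := hpart
  induction j with
  | zero => omega
  | succ n ih =>
    rcases Nat.lt_or_ge i (n + 1) with hlt | hge
    · exact le_trans (h n (by omega) (by omega)) (ih (by omega) (by omega))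
    · have : i = n + 1 := by omega
      simp [this]

lemma cells_mono (hpart : IsPartition lam r) {c d c' d' : ℕ}
    (hx : (c', d') ∈ cells lam r)
    (h1 : 1 ≤ c) (h2 : c ≤ c') (h3 : 1 ≤ d) (h4 : d ≤ d') : (c, d) ∈ cells lam r := by
  rw [mem_cells_iff] at hx ⊢
  exact ⟨h1, by omega, h3, le_trans (le_trans h4 hx.2.2.2) (lam_anti hpart h1 h2 hx.2.1)⟩

lemma rpp_row {P : (ℕ × ℕ) → ℕ} (hP : P ∈ RPP lam r k) {c d : ℕ} (hd : 1 ≤ d) :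
    ∀ e, (c, d + e) ∈ cells lam r → P (c, d) ≤ P (c, d + e) := by
  intro e
  induction e with
  | zero => intro _; simp
  | succ n ih =>
    intro h
    rw [mem_cells_iff] at h
    have hmem : (c, d + n) ∈ cells lam r := by
      rw [mem_cells_iff]; omega
    have h1 := hP.2.2.1 c (d + n) hmem (by rw [mem_cells_iff]; omega)
    have h2 := ih hmem
    have : d + (n + 1) = d + n + 1 := by omega
    rw [this]
    omega

lemma rpp_col {P : (ℕ × ℕ) → ℕ} (hpart : IsPartition lam r) (hP : P ∈ RPP lam r k)
    {c d : ℕ} (hc : 1 ≤ c) :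
    ∀ e, (c + e, d) ∈ cells lam r → P (c, d) ≤ P (c + e, d) := by
  intro e
  induction e with
  | zero => intro _; simp
  | succ n ih =>
    intro h
    have hmem : (c + n, d) ∈ cells lam r := by
      have h' := h; rw [mem_cells_iff] at h'
      exact cells_mono hpart h (by omega) (by omega) (by omega) (le_refl _)
    have h1 := hP.2.2.2 (c + n) d hmem (by
      have : c + n + 1 = c + (n + 1) := by omega
      rw [this]; exact h)
    have h2 := ih hmem
    have : c + (n + 1) = c + n + 1 := by omega
    rw [this]
    omega

lemma rpp_mono {P : (ℕ × ℕ) → ℕ} (hpart : IsPartition lam r) (hP : P ∈ RPP lam r k)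
    {c d c' d' : ℕ} (hq : (c, d) ∈ cells lam r) (hx : (c', d') ∈ cells lam r)
    (h1 : c ≤ c') (h2 : d ≤ d') : P (c, d) ≤ P (c', d') := by
  rw [mem_cells_iff] at hq hx
  have hmid : (c, d') ∈ cells lam r :=
    cells_mono hpart (by rw [mem_cells_iff]; exact hx) hq.1 h1 hx.2.2.1 (le_refl _)
  have e1 : P (c, d) ≤ P (c, d') := by
    have := rpp_row (hP := hP) (c := c) (d := d) hq.2.2.1 (d' - d)
      (by have : d + (d' - d) = d' := by omega
          rw [this]; exact hmid)
    have hdd : d + (d' - d) = d' := by omega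
    rwa [hdd] at this
  have e2 : P (c, d') ≤ P (c', d') := by
    have := rpp_col hpart hP (c := c) (d := d') hq.1 (c' - c)
      (by have : c + (c' - c) = c' := by omega
          rw [this]; rw [mem_cells_iff]; exact hx)
    have hcc : c + (c' - c) = c' := by omega
    rwa [hcc] at this
  omega

/-- max of the entries of the upper and left neighbours (0 on the border). -/
def Lnb (P : (ℕ × ℕ) → ℕ) (p : ℕ × ℕ) : ℕ :=
  max (P (p.1 - 1, p.2)) (P (p.1, p.2 - 1))

/-- min of the entries of the lower and right neighbours (`k` when absent). -/
noncomputable def Unb (lam : ℕ → ℕ) (r k : ℕ) (P : (ℕ × ℕ) → ℕ) (p : ℕ × ℕ) : ℕ :=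
  min (if (p.1 + 1, p.2) ∈ cells lam r then P (p.1 + 1, p.2) else k)
      (if (p.1, p.2 + 1) ∈ cells lam r then P (p.1, p.2 + 1) else k)

end ToggleAux

section ToggleAux2

variable {lam : ℕ → ℕ} {r k : ℕ} {P : (ℕ × ℕ) → ℕ} {a b : ℕ}

lemma mem_alpha_iff {i : ℕ} {q : ℕ × ℕ} :
    q ∈ alphaShape lam r P i ↔ q ∈ cells lam r ∧ P q < i := Iff.rfl

lemma Lnb_pair : Lnb P (a, b) = max (P (a - 1, b)) (P (a, b - 1)) := rfl

lemma Unb_pair : Unb lam r k P (a, b) =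
    min (if (a + 1, b) ∈ cells lam r then P (a + 1, b) else k)
        (if (a, b + 1) ∈ cells lam r then P (a, b + 1) else k) := rfl

lemma Lnb_le (hpart : IsPartition lam r) (hP : P ∈ RPP lam r k)
    (hp : (a, b) ∈ cells lam r) : Lnb P (a, b) ≤ P (a, b) := by
  have hp' := hp; rw [mem_cells_iff] at hp'
  rw [Lnb_pair]
  refine max_le ?_ ?_
  · rcases Nat.eq_or_lt_of_le hp'.1 with h1 | h1
    · have : (a - 1, b) ∉ cells lam r := by rw [mem_cells_iff]; omega
      rw [hP.1 _ this]; omega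
    · have hm : (a - 1, b) ∈ cells lam r :=
        cells_mono hpart hp (by omega) (by omega) hp'.2.2.1 (le_refl _)
      exact rpp_mono hpart hP hm hp (by omega) (le_refl _)
  · rcases Nat.eq_or_lt_of_le hp'.2.2.1 with h1 | h1
    · have : (a, b - 1) ∉ cells lam r := by rw [mem_cells_iff]; omega
      rw [hP.1 _ this]; omega
    · have hm : (a, b - 1) ∈ cells lam r :=
        cells_mono hpart hp hp'.1 (le_refl _) (by omega) (by omega)
      exact rpp_mono hpart hP hm hp (le_refl _) (by omega)

lemma le_Unb (hpart : IsPartition lam r) (hP : P ∈ RPP lam r k)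
    (hp : (a, b) ∈ cells lam r) : P (a, b) ≤ Unb lam r k P (a, b) := by
  rw [Unb_pair]
  refine le_min ?_ ?_
  · split_ifs with h
    · exact rpp_mono hpart hP hp h (by omega) (le_refl _)
    · exact hP.2.1 _ hp
  · split_ifs with h
    · exact rpp_mono hpart hP hp h (le_refl _) (by omega)
    · exact hP.2.1 _ hp

lemma Unb_le_k (hP : P ∈ RPP lam r k) : Unb lam r k P (a, b) ≤ k := by
  rw [Unb_pair]
  refine le_trans (min_le_left _ _) ?_
  split_ifs with h
  · exact hP.2.1 _ h
  · exact le_refl _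

lemma Unb_le_down (hdown : (a + 1, b) ∈ cells lam r) :
    Unb lam r k P (a, b) ≤ P (a + 1, b) := by
  rw [Unb_pair, if_pos hdown]; exact min_le_left _ _

lemma Unb_le_right (hright : (a, b + 1) ∈ cells lam r) :
    Unb lam r k P (a, b) ≤ P (a, b + 1) := by
  rw [Unb_pair, if_pos hright]; exact min_le_right _ _

lemma toggleIn_iff (hpart : IsPartition lam r) (hP : P ∈ RPP lam r k)
    (hp : (a, b) ∈ cells lam r) {i : ℕ} (hi : 1 ≤ i) :
    ToggleIn lam r (alphaShape lam r P i) (a, b) ↔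
      Lnb P (a, b) < i ∧ i ≤ P (a, b) := by
  have hp' := hp; rw [mem_cells_iff] at hp'
  constructor
  · rintro ⟨hnot, hsub⟩
    have hiP : i ≤ P (a, b) := by
      by_contra hcon
      exact hnot ⟨hp, by omega⟩
    refine ⟨?_, hiP⟩
    rw [Lnb_pair, max_lt_iff]
    constructor
    · rcases Nat.eq_or_lt_of_le hp'.1 with h1 | h1
      · have : (a - 1, b) ∉ cells lam r := by rw [mem_cells_iff]; omega
        rw [hP.1 _ this]; omega
      · have hq : (a - 1, b) ∈ insert (a, b) (alphaShape lam r P i) :=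
          hsub.2 (a, b) (Set.mem_insert _ _) (a - 1, b)
            (by show 1 ≤ a - 1; omega) (by show a - 1 ≤ a; omega)
            (by show 1 ≤ b; omega) (le_refl _)
        rcases hq with hq | hq
        · exfalso; simp only [Prod.mk.injEq] at hq; omega
        · exact hq.2
    · rcases Nat.eq_or_lt_of_le hp'.2.2.1 with h1 | h1
      · have : (a, b - 1) ∉ cells lam r := by rw [mem_cells_iff]; omega
        rw [hP.1 _ this]; omega
      · have hq : (a, b - 1) ∈ insert (a, b) (alphaShape lam r P i) :=
          hsub.2 (a, b) (Set.mem_insert _ _) (a, b - 1)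
            (by show 1 ≤ a; omega) (le_refl _)
            (by show 1 ≤ b - 1; omega) (by show b - 1 ≤ b; omega)
        rcases hq with hq | hq
        · exfalso; simp only [Prod.mk.injEq] at hq; omega
        · exact hq.2
  · rintro ⟨hL, hiP⟩
    rw [Lnb_pair, max_lt_iff] at hL
    refine ⟨fun hmem => by have := hmem.2; omega, ?_, ?_⟩
    · intro q hq
      rcases hq with hq | hq
      · exact hq ▸ hp
      · exact hq.1
    · rintro ⟨x1, x2⟩ hx ⟨q1, q2⟩ h1 h2 h3 h4
      simp only at h1 h2 h3 h4
      by_cases hqp : (q1, q2) = ((a : ℕ), (b : ℕ))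
      · exact hqp ▸ Set.mem_insert _ _
      · right
        rcases hx with hx | hx
        · simp only [Prod.mk.injEq] at hx hqp
          obtain ⟨ha, hb⟩ := hx
          have hqc : (q1, q2) ∈ cells lam r := cells_mono hpart hp h1 (by omega) h3 (by omega)
          by_cases hq1 : q1 < a
          · have hm : (a - 1, b) ∈ cells lam r :=
              cells_mono hpart hp (by omega) (by omega) (by omega) (le_refl _)
            have := rpp_mono hpart hP hqc hm (by omega) (by omega)
            exact ⟨hqc, by omega⟩
          · have hq2 : q2 < b := by omega
            have hm : (a, b - 1) ∈ cells lam r :=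
              cells_mono hpart hp (by omega) (le_refl _) (by omega) (by omega)
            have := rpp_mono hpart hP hqc hm (by omega) (by omega)
            exact ⟨hqc, by omega⟩
        · have hxc : (x1, x2) ∈ cells lam r := hx.1
          have hqc : (q1, q2) ∈ cells lam r := cells_mono hpart hxc h1 h2 h3 h4
          have := rpp_mono hpart hP hqc hxc h2 h4
          have := hx.2
          exact ⟨hqc, by omega⟩

lemma toggleOut_iff (hpart : IsPartition lam r) (hP : P ∈ RPP lam r k)
    (hp : (a, b) ∈ cells lam r) {i : ℕ} (hik : i ≤ k) :
    ToggleOut lam r (alphaShape lam r P i) (a, b) ↔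
      P (a, b) < i ∧ i ≤ Unb lam r k P (a, b) := by
  have hp' := hp; rw [mem_cells_iff] at hp'
  constructor
  · rintro ⟨hmem, hsub⟩
    refine ⟨hmem.2, ?_⟩
    rw [Unb_pair]
    refine le_min ?_ ?_
    · split_ifs with h
      · by_contra hcon
        have hd : (a + 1, b) ∈ alphaShape lam r P i \ {(a, b)} := by
          refine ⟨⟨h, by omega⟩, ?_⟩
          simp only [Set.mem_singleton_iff, Prod.mk.injEq]; omega
        have := hsub.2 _ hd (a, b) (by show 1 ≤ a; omega) (by show a ≤ a + 1; omega)
          (by show 1 ≤ b; omega) (le_refl _)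
        exact this.2 rfl
      · exact hik
    · split_ifs with h
      · by_contra hcon
        have hd : (a, b + 1) ∈ alphaShape lam r P i \ {(a, b)} := by
          refine ⟨⟨h, by omega⟩, ?_⟩
          simp only [Set.mem_singleton_iff, Prod.mk.injEq]; omega
        have := hsub.2 _ hd (a, b) (by show 1 ≤ a; omega) (le_refl _)
          (by show 1 ≤ b; omega) (by show b ≤ b + 1; omega)
        exact this.2 rfl
      · exact hik
  · rintro ⟨hPi, hiU⟩
    refine ⟨⟨hp, hPi⟩, ?_, ?_⟩
    · intro q hq; exact hq.1.1
    · rintro ⟨x1, x2⟩ hx ⟨q1, q2⟩ h1 h2 h3 h4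
      simp only at h1 h2 h3 h4
      have hxc : (x1, x2) ∈ cells lam r := hx.1.1
      have hxne : ¬(x1 = a ∧ x2 = b) := by
        have := hx.2; simp only [Set.mem_singleton_iff, Prod.mk.injEq] at this; exact this
      have hqc : (q1, q2) ∈ cells lam r := cells_mono hpart hxc h1 h2 h3 h4
      have hqx := rpp_mono hpart hP hqc hxc h2 h4
      have hxi := hx.1.2
      refine ⟨⟨hqc, by omega⟩, ?_⟩
      simp only [Set.mem_singleton_iff, Prod.mk.injEq]
      rintro ⟨rfl, rfl⟩
      by_cases hx1 : q1 < x1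
      · have hd : (q1 + 1, q2) ∈ cells lam r :=
          cells_mono hpart hxc (by omega) (by omega) (by omega) h4
        have h5 := Unb_le_down (P := P) (k := k) hd
        have h6 := rpp_mono hpart hP hd hxc (by omega) h4
        omega
      · have hx2 : q2 < x2 := by omega
        have hd : (q1, q2 + 1) ∈ cells lam r :=
          cells_mono hpart hxc (by omega) h2 (by omega) (by omega)
        have h5 := Unb_le_right (P := P) (k := k) hd
        have h6 := rpp_mono hpart hP hd hxc h2 (by omega)
        omega

lemma update_mem_RPP (hpart : IsPartition lam r) (hP : P ∈ RPP lam r k)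
    (hp : (a, b) ∈ cells lam r) {v : ℕ}
    (hv1 : Lnb P (a, b) ≤ v) (hv2 : v ≤ Unb lam r k P (a, b)) :
    Function.update P (a, b) v ∈ RPP lam r k := by
  have hp' := hp; rw [mem_cells_iff] at hp'
  refine ⟨?_, ?_, ?_, ?_⟩
  · intro q hq
    have hne : q ≠ (a, b) := fun h => hq (h ▸ hp)
    rw [Function.update_of_ne hne]
    exact hP.1 _ hq
  · intro q hq
    by_cases hqe : q = ((a : ℕ), (b : ℕ))
    · subst hqe
      rw [Function.update_self]
      exact le_trans hv2 (Unb_le_k hP)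
    · rw [Function.update_of_ne hqe]
      exact hP.2.1 _ hq
  · intro i j h1 h2
    by_cases he1 : ((i : ℕ), (j : ℕ)) = ((a : ℕ), (b : ℕ))
    · simp only [Prod.mk.injEq] at he1
      obtain ⟨rfl, rfl⟩ := he1
      rw [Function.update_self, Function.update_of_ne (by simp)]
      exact le_trans hv2 (Unb_le_right h2)
    · rw [Function.update_of_ne he1]
      by_cases he2 : ((i : ℕ), (j + 1 : ℕ)) = ((a : ℕ), (b : ℕ))
      · rw [he2, Function.update_self]
        simp only [Prod.mk.injEq] at he2
        have hLb : P (i, j) ≤ Lnb P (a, b) := by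
          rw [Lnb_pair]
          have heq : ((i : ℕ), (j : ℕ)) = ((a : ℕ), (b - 1 : ℕ)) := by
            simp only [Prod.mk.injEq]; omega
          rw [heq]
          exact le_max_right _ _
        omega
      · rw [Function.update_of_ne he2]
        exact hP.2.2.1 _ _ h1 h2
  · intro i j h1 h2
    by_cases he1 : ((i : ℕ), (j : ℕ)) = ((a : ℕ), (b : ℕ))
    · simp only [Prod.mk.injEq] at he1
      obtain ⟨rfl, rfl⟩ := he1
      rw [Function.update_self, Function.update_of_ne (by simp)]
      exact le_trans hv2 (Unb_le_down h2)
    · rw [Function.update_of_ne he1]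
      by_cases he2 : ((i + 1 : ℕ), (j : ℕ)) = ((a : ℕ), (b : ℕ))
      · rw [he2, Function.update_self]
        simp only [Prod.mk.injEq] at he2
        have hLb : P (i, j) ≤ Lnb P (a, b) := by
          rw [Lnb_pair]
          have heq : ((i : ℕ), (j : ℕ)) = ((a - 1 : ℕ), (b : ℕ)) := by
            simp only [Prod.mk.injEq]; omega
          rw [heq]
          exact le_max_left _ _
        omega
      · rw [Function.update_of_ne he2]
        exact hP.2.2.2 _ _ h1 h2

lemma Lnb_update (hp : (a, b) ∈ cells lam r) (v : ℕ) :
    Lnb (Function.update P (a, b) v) (a, b) = Lnb P (a, b) := by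
  have hp' := hp; rw [mem_cells_iff] at hp'
  rw [Lnb_pair, Lnb_pair,
    Function.update_of_ne (by simp only [Ne, Prod.mk.injEq]; omega),
    Function.update_of_ne (by simp only [Ne, Prod.mk.injEq]; omega)]

lemma Unb_update (v : ℕ) :
    Unb lam r k (Function.update P (a, b) v) (a, b) = Unb lam r k P (a, b) := by
  rw [Unb_pair, Unb_pair,
    Function.update_of_ne (by simp only [Ne, Prod.mk.injEq]; omega),
    Function.update_of_ne (by simp only [Ne, Prod.mk.injEq]; omega)]

lemma ncard_eq_of_invol {α : Type*} (s t : Set α) (f : α → α)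
    (hst : ∀ x ∈ s, f x ∈ t) (hts : ∀ x ∈ t, f x ∈ s)
    (hs : ∀ x ∈ s, f (f x) = x) (ht : ∀ x ∈ t, f (f x) = x) : s.ncard = t.ncard := by
  have himg : f '' s = t := by
    apply Set.Subset.antisymm
    · rintro y ⟨x, hx, rfl⟩; exact hst x hx
    · intro y hy
      exact ⟨f y, hts y hy, ht y hy⟩
  have hinj : Set.InjOn f s := by
    intro x hx y hy hxy
    rw [← hs x hx, ← hs y hy, hxy]
  rw [← himg, Set.ncard_image_of_injOn hinj]

end ToggleAux2

/-- Chan–Haddadan–Hopkins–Moci, Lemma 2.8: the weak distribution is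
toggle-symmetric at every cell `p` of `λ`: the number of pairs `(P,i)` with
`P ∈ RPP(λ,k)`, `1 ≤ i ≤ k`, such that `p` can be toggled into `α(P,i)` equals the
number of such pairs for which `p` can be toggled out of `α(P,i)`. -/
theorem weak_distribution_toggle_symmetric (lam : ℕ → ℕ) (r k : ℕ)
    (hpart : IsPartition lam r) (hk : 1 ≤ k) (p : ℕ × ℕ) (hp : p ∈ cells lam r) :
    {Pi : ((ℕ × ℕ) → ℕ) × ℕ | Pi.1 ∈ RPP lam r k ∧ 1 ≤ Pi.2 ∧ Pi.2 ≤ k ∧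
        ToggleIn lam r (alphaShape lam r Pi.1 Pi.2) p}.ncard
      = {Pi : ((ℕ × ℕ) → ℕ) × ℕ | Pi.1 ∈ RPP lam r k ∧ 1 ≤ Pi.2 ∧ Pi.2 ≤ k ∧
        ToggleOut lam r (alphaShape lam r Pi.1 Pi.2) p}.ncard := by
  obtain ⟨a, b⟩ := p
  classical
  apply ncard_eq_of_invol _ _ (fun Pi : ((ℕ × ℕ) → ℕ) × ℕ =>
    (Function.update Pi.1 (a, b) (Lnb Pi.1 (a, b) + Unb lam r k Pi.1 (a, b) - Pi.1 (a, b)),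
     Lnb Pi.1 (a, b) + Unb lam r k Pi.1 (a, b) + 1 - Pi.2))
  · rintro ⟨P, i⟩ ⟨hP, hi1, hik, htog⟩
    dsimp only at hP hi1 hik htog
    rw [toggleIn_iff hpart hP hp hi1] at htog
    have hLv := Lnb_le hpart hP hp
    have hvU := le_Unb hpart hP hp
    have hUk := Unb_le_k (a := a) (b := b) hP
    have hP' : Function.update P (a, b)
        (Lnb P (a, b) + Unb lam r k P (a, b) - P (a, b)) ∈ RPP lam r k :=
      update_mem_RPP hpart hP hp (by omega) (by omega)
    dsimp only
    refine ⟨hP', by omega, by omega, ?_⟩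
    rw [toggleOut_iff hpart hP' hp (by omega), Function.update_self,
      Unb_update]
    omega
  · rintro ⟨P, i⟩ ⟨hP, hi1, hik, htog⟩
    dsimp only at hP hi1 hik htog
    rw [toggleOut_iff hpart hP hp hik] at htog
    have hLv := Lnb_le hpart hP hp
    have hvU := le_Unb hpart hP hp
    have hUk := Unb_le_k (a := a) (b := b) hP
    have hP' : Function.update P (a, b)
        (Lnb P (a, b) + Unb lam r k P (a, b) - P (a, b)) ∈ RPP lam r k :=
      update_mem_RPP hpart hP hp (by omega) (by omega)
    dsimp only
    refine ⟨hP', by omega, by omega, ?_⟩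
    rw [toggleIn_iff hpart hP' hp (by omega), Function.update_self,
      Lnb_update hp]
    omega
  · rintro ⟨P, i⟩ ⟨hP, hi1, hik, htog⟩
    dsimp only at hP hi1 hik htog
    rw [toggleIn_iff hpart hP hp hi1] at htog
    have hLv := Lnb_le hpart hP hp
    have hvU := le_Unb hpart hP hp
    have hUk := Unb_le_k (a := a) (b := b) hP
    dsimp only
    rw [Lnb_update hp, Unb_update, Function.update_self, Prod.mk.injEq]
    constructor
    · have e4 : Lnb P (a, b) + Unb lam r k P (a, b) -
          (Lnb P (a, b) + Unb lam r k P (a, b) - P (a, b)) = P (a, b) := by omega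
      rw [e4, Function.update_idem, Function.update_eq_self]
    · omega
  · rintro ⟨P, i⟩ ⟨hP, hi1, hik, htog⟩
    dsimp only at hP hi1 hik htog
    rw [toggleOut_iff hpart hP hp hik] at htog
    have hLv := Lnb_le hpart hP hp
    have hvU := le_Unb hpart hP hp
    have hUk := Unb_le_k (a := a) (b := b) hP
    dsimp only
    rw [Lnb_update hp, Unb_update, Function.update_self, Prod.mk.injEq]
    constructor
    · have e4 : Lnb P (a, b) + Unb lam r k P (a, b) -
          (Lnb P (a, b) + Unb lam r k P (a, b) - P (a, b)) = P (a, b) := by omega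
      rw [e4, Function.update_idem, Function.update_eq_self]
    · omega
end
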